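/- arXiv:2112.02064 — 3 statements merged into one kernel-verified Lean document; each statement's English description precedes it below -/
import Mathlib

section
/- Let 0 < q < 1 and let k ≥ 1, N ≥ 1 be integers. Then N·M(k,N)/[2k-1]_{q²}!! = (q^{2k-2Nk-k²}·(-q²;q²)_k / ((1-q^{2k})·(q²;q²)_k))·Φ(q²) + (q^{2k-k²}·(-q²;q²)_k / ((q^{2k}-1)·(q²;q²)_k))·Φ(q^{2(N+1)}), where Φ(z) = ∑_{a=0}^{k} ((-q^{2k+2};q²)_a·(q^{2k};q²)_a·(q^{-2k};q²)_a / ((-q²;q²)_a·(q^{2k+2};q²)_a·(q²;q²)_a))·z^a is a terminating basic hypergeometric ₃φ₂ sum. -/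
/-- The q-Pochhammer symbol `(a;c)_n = ∏_{i=0}^{n-1} (1 - a c^i)`. -/
noncomputable def qPoch (a c : ℝ) (n : ℕ) : ℝ := ∏ i ∈ Finset.range n, (1 - a * c ^ i)

/-- The q²-double factorial `[2k-1]_{q²}!! = ∏_{j=1}^{k} (1 - q^{4j-2})/(1-q²)`. -/
noncomputable def qDF (q : ℝ) (k : ℕ) : ℝ :=
  ∏ j ∈ Finset.range k, (1 - q ^ (4 * j + 2)) / (1 - q ^ 2)

/-- The residue `res_{q^{2k}}`. -/
noncomputable def resR (q : ℝ) (k : ℕ) : ℝ :=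
  q ^ ((k : ℤ) * (1 - (k : ℤ))) * qDF q k * q ^ k *
    (∏ n ∈ Finset.Icc 1 k, (q ^ (2 * n) + q ^ (2 * k))) /
    ∏ n ∈ Finset.range (k + 1), (1 - q ^ (2 * n + 2 * k))

/-- The residue `res_{q^{-2a}}`. -/
noncomputable def resr (q : ℝ) (k a : ℕ) : ℝ :=
  q ^ ((k : ℤ) * (1 - (k : ℤ))) * qDF q k * q ^ ((k : ℤ) - 2 * (a : ℤ)) *
      q ^ (-(2 * (k : ℤ) * (a : ℤ))) *
    (∏ n ∈ Finset.Icc 1 k, (1 + q ^ (2 * n + 2 * a))) /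
    (q ^ (-(2 * (a : ℤ))) * (q ^ (2 * k + 2 * a) - 1) *
      (∏ n ∈ Finset.range a, (1 - q ^ (2 * (n : ℤ) - 2 * (a : ℤ)))) *
      ∏ n ∈ Finset.Icc (a + 1) k, (1 - q ^ (2 * (n : ℤ) - 2 * (a : ℤ))))

/-- `N · M(k,N)`, the (unnormalised) 2k-th moment of the discrete q-Hermite ensemble,
defined via the Morozov–Popolitov–Shakirov residue formula. -/
noncomputable def NM (q : ℝ) (k N : ℕ) : ℝ :=
  q ^ (-(2 * (N : ℤ) * (k : ℤ))) * resR q k +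
    ∑ a ∈ Finset.range (k + 1), q ^ (2 * N * a) * resr q k a

/-- The terminating ₃φ₂ sum `Φ(z)`. -/
noncomputable def Phi (q : ℝ) (k : ℕ) (z : ℝ) : ℝ :=
  ∑ a ∈ Finset.range (k + 1),
    (qPoch (-(q ^ (2 * k + 2))) (q ^ 2) a * qPoch (q ^ (2 * k)) (q ^ 2) a *
        qPoch (q ^ (-(2 * (k : ℤ)))) (q ^ 2) a) /
      (qPoch (-(q ^ 2)) (q ^ 2) a * qPoch (q ^ (2 * k + 2)) (q ^ 2) a *
        qPoch (q ^ 2) (q ^ 2) a) * z ^ a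

/-
Up to one common factor, `resR q k` and the `resr q k a` are the residues of
`z ↦ -P(z) / ∏ⱼ (1 - z / vⱼ)`, `P(z) = ∏ₙ (z + q^{2n})`, at its simple poles `v = q^{2k}` and
`v = q^{-2a}` (`0 ≤ a ≤ k`). Since `deg P = k` and there are `k + 2` poles, these residues sum to
zero: this is the vanishing of the top coefficient of the Lagrange interpolant of `P`. Hence
`resR = -∑ₐ resr`. Each `resr q k a` is evaluated in closed form through the reflection
`(q^{-2k};q²)_a (q²;q²)_{k-a} q^{2ka} = (-1)^a q^{a²-a} (q²;q²)_k`; it is `[2k-1]!!` times a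
prefactor independent of `a` times `q^{2a}` times the `a`-th coefficient of `Φ`. Summing against
`q^{2Na}`, respectively against `1`, produces `Φ(q^{2(N+1)})` and `Φ(q²)`.
-/

open Finset Polynomial

theorem Lagrange.sum_mul_eval_div_prod_one_sub_div_eq_zero {F ι : Type*} [Field F]
    [DecidableEq ι] {s : Finset ι} {v : ι → F} (hvs : Set.InjOn v s) (hv : ∀ i ∈ s, v i ≠ 0)
    {P : F[X]} (hP : P.degree < ↑(#s - 1)) :
    ∑ i ∈ s, v i * P.eval (v i) / ∏ j ∈ s.erase i, (1 - v i / v j) = 0 := by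
  have hterm : ∀ i ∈ s, v i * P.eval (v i) / ∏ j ∈ s.erase i, (1 - v i / v j) =
      (-1) ^ (#s - 1) * (∏ j ∈ s, v j) * (P.eval (v i) / ∏ j ∈ s.erase i, (v i - v j)) := by
    intro i hi
    have hfactor : ∏ j ∈ s.erase i, (1 - v i / v j) =
        (-1) ^ (#s - 1) * (∏ j ∈ s.erase i, (v i - v j)) / ∏ j ∈ s.erase i, v j := by
      rw [← card_erase_of_mem hi, ← prod_const, ← prod_mul_distrib, ← prod_div_distrib]
      refine prod_congr rfl fun j hj => ?_
      field_simp [hv j (mem_of_mem_erase hj)]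
      ring
    have hdiff : ∏ j ∈ s.erase i, (v i - v j) ≠ 0 := by
      simpa [Lagrange.nodalWeight, prod_inv_distrib] using Lagrange.nodalWeight_ne_zero hvs hi
    have hsign : ((-1 : F) ^ (#s - 1)) ^ 2 = 1 := by rw [← pow_mul, pow_mul', neg_one_sq, one_pow]
    rw [hfactor, ← mul_prod_erase s v hi]
    field_simp [hv i hi, prod_ne_zero_iff.mpr fun j hj => hv j (mem_of_mem_erase hj)]
    rw [hsign, mul_one]
  have hP' : P.degree < #s := hP.trans_le (by exact_mod_cast Nat.sub_le _ _)
  rw [sum_congr rfl hterm, ← mul_sum, ← Lagrange.coeff_eq_sum hvs hP',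
    coeff_eq_zero_of_degree_lt hP, mul_zero]

lemma zpow_eq_pow_div_pow {G₀ : Type*} [GroupWithZero G₀] {q : G₀} (hq : q ≠ 0) {e : ℤ}
    (b c : ℕ) (h : e = b - c) : q ^ e = q ^ b / q ^ c := by
  rw [h, zpow_sub₀ hq, zpow_natCast, zpow_natCast]

lemma sq_pow_choose_two_mul_pow {R : Type*} [CommRing R] (q : R) (a : ℕ) :
    (q ^ 2) ^ a.choose 2 * q ^ a = q ^ (a * a) := by
  induction a with
  | zero => simp
  | succ a ih =>
    rw [Nat.choose_succ_succ, Nat.choose_one_right]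
    linear_combination q ^ (2 * a + 1) * ih

section QPochhammer

variable {a c : ℝ}

lemma qPoch_pos (hc₀ : 0 ≤ c) (hc₁ : c ≤ 1) (ha : a < 1) (n : ℕ) : 0 < qPoch a c n := by
  refine prod_pos fun i _ => ?_
  have h₀ : 0 ≤ c ^ i := pow_nonneg hc₀ i
  have h₁ : c ^ i ≤ 1 := pow_le_one₀ hc₀ hc₁
  rcases le_or_gt a 0 with h | h <;> nlinarith

lemma qPoch_zero (a c : ℝ) : qPoch a c 0 = 1 := prod_range_zero _

lemma qPoch_succ (a c : ℝ) (n : ℕ) : qPoch a c (n + 1) = qPoch a c n * (1 - a * c ^ n) :=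
  prod_range_succ _ n

lemma qPoch_succ' (a c : ℝ) (n : ℕ) : qPoch a c (n + 1) = (1 - a) * qPoch (a * c) c n := by
  rw [qPoch, prod_range_succ', mul_comm, qPoch, pow_zero, mul_one]
  congr 1
  exact prod_congr rfl fun i _ => by ring

lemma qPoch_add (a c : ℝ) (m n : ℕ) :
    qPoch a c (m + n) = qPoch a c m * qPoch (a * c ^ m) c n := by
  rw [qPoch, prod_range_add]
  congr 1
  exact prod_congr rfl fun i _ => by ring

lemma qPoch_mul_one_sub (a c : ℝ) (n : ℕ) :
    qPoch a c n * (1 - a * c ^ n) = (1 - a) * qPoch (a * c) c n := by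
  rw [← qPoch_succ, qPoch_succ']

lemma qPoch_mul_qPoch_comm (a c : ℝ) (m n : ℕ) :
    qPoch a c m * qPoch (a * c ^ m) c n = qPoch a c n * qPoch (a * c ^ n) c m := by
  rw [← qPoch_add, ← qPoch_add, add_comm]

lemma qPoch_zpow_neg (hc : c ≠ 0) {a n : ℕ} (ha : a ≤ n) :
    qPoch (c ^ (-(n : ℤ))) c a * qPoch c c (n - a) * c ^ (n * a) =
      (-1) ^ a * c ^ a.choose 2 * qPoch c c n := by
  induction a with
  | zero => simp [qPoch_zero]
  | succ a ih =>
    obtain ⟨m, rfl⟩ := Nat.exists_eq_add_of_le ha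
    rw [show a + 1 + m - (a + 1) = m by omega]
    rw [show a + 1 + m - a = m + 1 by omega] at ih
    have hstep : qPoch (c ^ (-((a + 1 + m : ℕ) : ℤ))) c (a + 1) * qPoch c c m *
        c ^ ((a + 1 + m) * (a + 1)) = -c ^ a * (qPoch (c ^ (-((a + 1 + m : ℕ) : ℤ))) c a *
          qPoch c c (m + 1) * c ^ ((a + 1 + m) * a)) := by
      rw [qPoch_succ, qPoch_succ c c m, zpow_neg, zpow_natCast]
      field_simp
      ring
    rw [hstep, ih (by omega), Nat.choose_succ_succ, Nat.choose_one_right]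
    ring

end QPochhammer

section Products

variable {q : ℝ}

lemma qPoch_sq_zpow_neg (hq : q ≠ 0) {a n : ℕ} (ha : a ≤ n) :
    qPoch (q ^ (-(2 * (n : ℤ)))) (q ^ 2) a * qPoch (q ^ 2) (q ^ 2) (n - a) *
        q ^ (2 * n * a + a) =
      (-1) ^ a * q ^ (a * a) * qPoch (q ^ 2) (q ^ 2) n := by
  have h := qPoch_zpow_neg (pow_ne_zero 2 hq) ha
  rw [← zpow_natCast q 2, ← zpow_mul, show ((2 : ℕ) : ℤ) * -(n : ℤ) = -(2 * n) by push_cast; ring,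
    zpow_natCast] at h
  rw [← sq_pow_choose_two_mul_pow, pow_add, ← pow_mul]
  linear_combination q ^ a * h

lemma prod_range_one_sub_zpow_eq_qPoch (hq : q ≠ 0) (a : ℕ) :
    ∏ n ∈ range a, (1 - q ^ (2 * (n : ℤ) - 2 * (a : ℤ))) =
      qPoch (q ^ (-(2 * (a : ℤ)))) (q ^ 2) a := by
  refine prod_congr rfl fun n _ => ?_
  rw [← pow_mul, ← zpow_natCast, ← zpow_add₀ hq]
  push_cast
  ring_nf

lemma prod_Icc_one_sub_zpow_eq_qPoch (a k : ℕ) :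
    ∏ n ∈ Icc (a + 1) k, (1 - q ^ (2 * (n : ℤ) - 2 * (a : ℤ))) =
      qPoch (q ^ 2) (q ^ 2) (k - a) := by
  rw [qPoch, ← Ico_add_one_right_eq_Icc, prod_Ico_eq_prod_range,
    show k + 1 - (a + 1) = k - a by omega]
  refine prod_congr rfl fun i _ => ?_
  rw [show 2 * (((a + 1 + i : ℕ)) : ℤ) - 2 * (a : ℤ) = ((2 * i + 2 : ℕ) : ℤ) by push_cast; ring,
    zpow_natCast]
  ring

lemma prod_Icc_one_add_eq_qPoch (a k : ℕ) :
    ∏ n ∈ Icc 1 k, (1 + q ^ (2 * n + 2 * a)) = qPoch (-(q ^ 2) * (q ^ 2) ^ a) (q ^ 2) k := by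
  rw [qPoch, ← Ico_add_one_right_eq_Icc, prod_Ico_eq_prod_range, Nat.add_sub_cancel]
  exact prod_congr rfl fun i _ => by ring

lemma qDF_pos (hq₀ : 0 < q) (hq₁ : q < 1) (k : ℕ) : 0 < qDF q k := by
  have hsub : ∀ m ≠ 0, 0 < 1 - q ^ m := fun m hm => sub_pos.2 (pow_lt_one₀ hq₀.le hq₁ hm)
  exact prod_pos fun j _ => div_pos (hsub _ (by omega)) (hsub 2 two_ne_zero)

end Products

noncomputable def mpsPole (q : ℝ) (k j : ℕ) : ℝ :=
  q ^ (if j ≤ k then -(2 * (j : ℤ)) else 2 * (k : ℤ))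

noncomputable def mpsNumerator (q : ℝ) (k : ℕ) : ℝ[X] := ∏ n ∈ Icc 1 k, (X + C (q ^ (2 * n)))

noncomputable def mpsResidue (q : ℝ) (k i : ℕ) : ℝ :=
  mpsPole q k i * (mpsNumerator q k).eval (mpsPole q k i) /
    ∏ j ∈ (range (k + 2)).erase i, (1 - mpsPole q k i / mpsPole q k j)

section Residues

variable {q : ℝ} {k : ℕ}

lemma mpsPole_of_le {j : ℕ} (hj : j ≤ k) : mpsPole q k j = q ^ (-(2 * (j : ℤ))) := by
  rw [mpsPole, if_pos hj]

lemma mpsPole_succ : mpsPole q k (k + 1) = q ^ (2 * k) := by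
  rw [mpsPole, if_neg (by omega), ← zpow_natCast]
  push_cast
  rfl

lemma mpsPole_injOn (hq₀ : 0 < q) (hq₁ : q < 1) (hk : 1 ≤ k) :
    Set.InjOn (mpsPole q k) (range (k + 2)) := by
  intro i hi j hj hij
  have := zpow_right_injective₀ hq₀ hq₁.ne hij
  simp only [coe_range, Set.mem_Iio] at hi hj
  split_ifs at this <;> omega

lemma degree_mpsNumerator : (mpsNumerator q k).degree = k := by
  rw [mpsNumerator, degree_prod, sum_congr rfl fun n _ => degree_X_add_C (q ^ (2 * n))]
  simp

lemma sum_mpsResidue_eq_zero (hq₀ : 0 < q) (hq₁ : q < 1) (hk : 1 ≤ k) :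
    ∑ i ∈ range (k + 2), mpsResidue q k i = 0 := by
  refine Lagrange.sum_mul_eval_div_prod_one_sub_div_eq_zero (mpsPole_injOn hq₀ hq₁ hk)
    (fun j _ => zpow_ne_zero _ hq₀.ne') ?_
  rw [degree_mpsNumerator, card_range]
  exact_mod_cast (by omega : k < k + 2 - 1)

lemma resR_eq_mpsResidue (hq : q ≠ 0) :
    resR q k =
      q ^ ((k : ℤ) * (1 - k)) * qDF q k * q ^ k / q ^ (2 * k) * mpsResidue q k (k + 1) := by
  have hpole : ∀ j ∈ range (k + 1),
      1 - mpsPole q k (k + 1) / mpsPole q k j = 1 - q ^ (2 * j + 2 * k) := by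
    intro j hj
    rw [mpsPole_succ, mpsPole_of_le (by simpa [Nat.lt_succ_iff] using hj), zpow_neg,
      show (2 * (j : ℤ)) = ((2 * j : ℕ) : ℤ) by push_cast; ring, zpow_natCast, div_inv_eq_mul,
      pow_add, mul_comm]
  have heval :
      (mpsNumerator q k).eval (q ^ (2 * k)) = ∏ n ∈ Icc 1 k, (q ^ (2 * n) + q ^ (2 * k)) := by
    simp only [mpsNumerator, eval_prod, eval_add, eval_X, eval_C, add_comm]
  rw [mpsResidue, range_add_one, erase_insert notMem_range_self, prod_congr rfl hpole,
    mpsPole_succ, heval, resR]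
  field_simp

lemma resr_eq_mpsResidue (hq : q ≠ 0) {a : ℕ} (ha : a ≤ k) :
    resr q k a = q ^ ((k : ℤ) * (1 - k)) * qDF q k * q ^ k / q ^ (2 * k) * mpsResidue q k a := by
  have hq2a : q ^ (-(2 * (a : ℤ))) = (q ^ (2 * a))⁻¹ := by
    rw [← zpow_natCast, ← zpow_neg]; push_cast; ring_nf
  have hqk2a : q ^ ((k : ℤ) - 2 * a) = q ^ k * (q ^ (2 * a))⁻¹ := by
    rw [sub_eq_add_neg, zpow_add₀ hq, hq2a, zpow_natCast]
  have hqka : q ^ (-(2 * (k : ℤ) * a)) = ((q ^ (2 * a))⁻¹) ^ k := by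
    rw [← hq2a, ← zpow_natCast, ← zpow_mul]; ring_nf
  have hpole : ∀ j ∈ (range (k + 1)).erase a,
      1 - mpsPole q k a / mpsPole q k j = 1 - q ^ (2 * (j : ℤ) - 2 * (a : ℤ)) := by
    intro j hj
    rw [mpsPole_of_le ha, mpsPole_of_le (by simpa [Nat.lt_succ_iff] using mem_of_mem_erase hj),
      ← zpow_sub₀ hq]
    ring_nf
  have hsplit : (range (k + 1)).erase a = range a ∪ Icc (a + 1) k := by
    ext j; simp only [mem_erase, mem_range, mem_union, mem_Icc]; omega
  have hdisj : Disjoint (range a) (Icc (a + 1) k) := by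
    rw [disjoint_left]; intro j hj hj'; simp only [mem_range, mem_Icc] at hj hj'; omega
  have heval : (mpsNumerator q k).eval (q ^ (-(2 * (a : ℤ)))) =
      ((q ^ (2 * a))⁻¹) ^ k * ∏ n ∈ Icc 1 k, (1 + q ^ (2 * n + 2 * a)) := by
    have hfactor : ∀ n ∈ Icc 1 k, (X + C (q ^ (2 * n))).eval (q ^ (2 * a))⁻¹ =
        (q ^ (2 * a))⁻¹ * (1 + q ^ (2 * n + 2 * a)) := fun n _ => by
      simp only [eval_add, eval_X, eval_C]
      field_simp
      ring
    rw [mpsNumerator, eval_prod, hq2a, prod_congr rfl hfactor, prod_mul_distrib, prod_const,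
      Nat.card_Icc, add_tsub_cancel_right]
  rw [mpsResidue, range_add_one, erase_insert_of_ne (by omega), prod_insert (by simp),
    prod_congr rfl hpole, hsplit, prod_union hdisj, mpsPole_of_le ha, mpsPole_succ,
    heval, resr, hq2a, hqka, hqk2a]
  field_simp
  ring

lemma resR_add_sum_resr_eq_zero (hq₀ : 0 < q) (hq₁ : q < 1) (hk : 1 ≤ k) :
    resR q k + ∑ a ∈ range (k + 1), resr q k a = 0 := by
  rw [resR_eq_mpsResidue hq₀.ne', sum_congr rfl fun a ha =>
    resr_eq_mpsResidue hq₀.ne' (Nat.lt_succ_iff.mp (mem_range.mp ha)), ← mul_sum, ← mul_add,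
    add_comm, ← sum_range_succ, sum_mpsResidue_eq_zero hq₀ hq₁ hk, mul_zero]

end Residues

noncomputable def phiCoeff (q : ℝ) (k a : ℕ) : ℝ :=
  qPoch (-(q ^ (2 * k + 2))) (q ^ 2) a * qPoch (q ^ (2 * k)) (q ^ 2) a *
      qPoch (q ^ (-(2 * (k : ℤ)))) (q ^ 2) a /
    (qPoch (-(q ^ 2)) (q ^ 2) a * qPoch (q ^ (2 * k + 2)) (q ^ 2) a * qPoch (q ^ 2) (q ^ 2) a)

noncomputable def phiPrefactor (q : ℝ) (k : ℕ) : ℝ :=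
  q ^ (2 * (k : ℤ) - (k : ℤ) ^ 2) * qPoch (-(q ^ 2)) (q ^ 2) k /
    ((q ^ (2 * k) - 1) * qPoch (q ^ 2) (q ^ 2) k)

section ClosedForm

variable {q : ℝ} {k : ℕ}

lemma Phi_eq_sum_phiCoeff (z : ℝ) : Phi q k z = ∑ a ∈ range (k + 1), phiCoeff q k a * z ^ a :=
  rfl

lemma resr_eq_phiCoeff (hq₀ : 0 < q) (hq₁ : q < 1) (hk : 1 ≤ k) {a : ℕ} (ha : a ≤ k) :
    resr q k a = qDF q k * phiPrefactor q k * phiCoeff q k a * q ^ (2 * a) := by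
  have hq := hq₀.ne'
  have hx₁ : q ^ 2 < 1 := by nlinarith
  have hpos : ∀ b ≤ q ^ 2, ∀ n, qPoch b (q ^ 2) n ≠ 0 := fun b hb n =>
    (qPoch_pos (sq_nonneg q) hx₁.le (hb.trans_lt hx₁) n).ne'
  have hneg : -(q ^ 2) ≤ q ^ 2 := neg_le_self (sq_nonneg q)
  have hk₁ : q ^ (2 * k + 2) ≤ q ^ 2 := pow_le_pow_of_le_one hq₀.le hq₁.le (by omega)
  have hsub : ∀ m ≠ 0, 1 - q ^ m ≠ 0 := fun m hm => (sub_pos.2 (pow_lt_one₀ hq₀.le hq₁ hm)).ne'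
  have hk' : q ^ (2 * k) - 1 ≠ 0 := fun h => hsub (2 * k) (by omega) (by linarith)
  have hka' : q ^ (2 * k + 2 * a) - 1 ≠ 0 := fun h => hsub (2 * k + 2 * a) (by omega) (by linarith)
  have hlower := qPoch_sq_zpow_neg hq (le_refl a)
  rw [Nat.sub_self, qPoch_zero, mul_one] at hlower
  have hphi := qPoch_sq_zpow_neg hq ha
  rw [mul_assoc] at hphi
  have hshift : qPoch (q ^ (2 * k)) (q ^ 2) a * (1 - q ^ (2 * k + 2 * a)) =
      (1 - q ^ (2 * k)) * qPoch (q ^ (2 * k + 2)) (q ^ 2) a := by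
    rw [show q ^ (2 * k + 2 * a) = q ^ (2 * k) * (q ^ 2) ^ a by ring,
      show q ^ (2 * k + 2) = q ^ (2 * k) * q ^ 2 by ring, qPoch_mul_one_sub]
  have hupper : (∏ n ∈ Icc 1 k, (1 + q ^ (2 * n + 2 * a))) * qPoch (-(q ^ 2)) (q ^ 2) a =
      qPoch (-(q ^ 2)) (q ^ 2) k * qPoch (-(q ^ (2 * k + 2))) (q ^ 2) a := by
    rw [prod_Icc_one_add_eq_qPoch, mul_comm, qPoch_mul_qPoch_comm,
      show -(q ^ 2) * (q ^ 2) ^ k = -(q ^ (2 * k + 2)) by ring]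
  rw [resr, phiCoeff, phiPrefactor, prod_range_one_sub_zpow_eq_qPoch hq,
    prod_Icc_one_sub_zpow_eq_qPoch, eq_div_of_mul_eq (pow_ne_zero (2 * a * a + a) hq) hlower,
    eq_div_of_mul_eq (mul_ne_zero (hpos _ le_rfl (k - a)) (pow_ne_zero (2 * k * a + a) hq)) hphi,
    eq_div_of_mul_eq (hsub (2 * k + 2 * a) (by omega)) hshift,
    eq_div_of_mul_eq (hpos _ hneg a) hupper,
    zpow_eq_pow_div_pow hq k (k * k) (by push_cast; ring),
    zpow_eq_pow_div_pow hq k (2 * a) (by push_cast; ring),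
    zpow_eq_pow_div_pow hq 0 (2 * k * a) (by push_cast; ring),
    zpow_eq_pow_div_pow hq 0 (2 * a) (by push_cast; ring),
    zpow_eq_pow_div_pow hq (2 * k) (k * k) (by push_cast; ring)]
  field_simp [hpos _ hneg a, hpos _ le_rfl a, hpos _ le_rfl k, hpos _ le_rfl (k - a),
    hpos _ hk₁ a, hsub (2 * k + 2 * a) (by omega)]
  have hsign : (-1 : ℝ) ^ (a * 2) = 1 := by rw [pow_mul', neg_one_sq, one_pow]
  ring_nf
  rw [hsign]
  ring

lemma sum_resr_mul_pow (hq₀ : 0 < q) (hq₁ : q < 1) (hk : 1 ≤ k) (z : ℝ) :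
    ∑ a ∈ range (k + 1), resr q k a * z ^ a =
      qDF q k * phiPrefactor q k * Phi q k (q ^ 2 * z) := by
  rw [Phi_eq_sum_phiCoeff, mul_sum]
  refine sum_congr rfl fun a ha => ?_
  rw [resr_eq_phiCoeff hq₀ hq₁ hk (Nat.lt_succ_iff.mp (mem_range.mp ha))]
  ring

end ClosedForm

theorem qHermite_moment_basic_hypergeometric_general
    (q : ℝ) (hq0 : 0 < q) (hq1 : q < 1) (k N : ℕ) (hk : 1 ≤ k) :
    NM q k N / qDF q k =
      q ^ (2 * (k : ℤ) - 2 * (N : ℤ) * (k : ℤ) - (k : ℤ) ^ 2) * qPoch (-(q ^ 2)) (q ^ 2) k /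
          ((1 - q ^ (2 * k)) * qPoch (q ^ 2) (q ^ 2) k) * Phi q k (q ^ 2) +
        q ^ (2 * (k : ℤ) - (k : ℤ) ^ 2) * qPoch (-(q ^ 2)) (q ^ 2) k /
          ((q ^ (2 * k) - 1) * qPoch (q ^ 2) (q ^ 2) k) * Phi q k (q ^ (2 * (N + 1))) := by
  have hq := hq0.ne'
  have hpole_qk : resR q k = -(qDF q k * phiPrefactor q k * Phi q k (q ^ 2)) := by
    have h := sum_resr_mul_pow hq0 hq1 hk 1
    simp only [one_pow, mul_one] at h
    linear_combination resR_add_sum_resr_eq_zero hq0 hq1 hk - h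
  have hpoles_qa : ∑ a ∈ range (k + 1), q ^ (2 * N * a) * resr q k a =
      qDF q k * phiPrefactor q k * Phi q k (q ^ (2 * (N + 1))) := by
    rw [show q ^ (2 * (N + 1)) = q ^ 2 * q ^ (2 * N) by ring, ← sum_resr_mul_pow hq0 hq1 hk]
    exact sum_congr rfl fun a _ => by ring
  rw [NM, hpole_qk, hpoles_qa, phiPrefactor,
    show (1 : ℝ) - q ^ (2 * k) = -(q ^ (2 * k) - 1) by ring,
    zpow_eq_pow_div_pow hq (e := -(2 * N * k)) 0 (2 * N * k) (by push_cast; ring),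
    zpow_eq_pow_div_pow hq (e := 2 * k - 2 * N * k - k ^ 2) (2 * k) (2 * N * k + k * k)
      (by push_cast; ring),
    zpow_eq_pow_div_pow hq (e := 2 * k - k ^ 2) (2 * k) (k * k) (by push_cast; ring)]
  field_simp [(qDF_pos hq0 hq1 k).ne']
  ring

theorem qHermite_moment_basic_hypergeometric
    (q : ℝ) (hq0 : 0 < q) (hq1 : q < 1) (k N : ℕ) (hk : 1 ≤ k) (hN : 1 ≤ N) :
    NM q k N / qDF q k =
      q ^ (2 * (k : ℤ) - 2 * (N : ℤ) * (k : ℤ) - (k : ℤ) ^ 2) * qPoch (-(q ^ 2)) (q ^ 2) k /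
          ((1 - q ^ (2 * k)) * qPoch (q ^ 2) (q ^ 2) k) * Phi q k (q ^ 2) +
        q ^ (2 * (k : ℤ) - (k : ℤ) ^ 2) * qPoch (-(q ^ 2)) (q ^ 2) k /
          ((q ^ (2 * k) - 1) * qPoch (q ^ 2) (q ^ 2) k) * Phi q k (q ^ (2 * (N + 1))) :=
  qHermite_moment_basic_hypergeometric_general q hq0 hq1 k N hk
end

section
/- Let k ≥ 0 be an integer and let z be a real number with 0 < z < 1. Then ∑_{n=1}^{∞} Q_k(n)·n·(1-z)²·z^{n-1} = (2k-1)!!·((1+z)/(1-z))^k. In other words, the 2k-th GUE moment, when n-1 is chosen randomly according to a Negative Binomial distribution with parameters (2,z), equals the 2k-th moment of a centred Gaussian of variance (1+z)/(1-z). -/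
/-- The rising Pochhammer symbol `(a)_i = a (a+1) ⋯ (a+i-1)`. -/
noncomputable def poch (a : ℝ) (i : ℕ) : ℝ := ∏ j ∈ Finset.range i, (a + j)

/-- The double factorial `(2k-1)!! = ∏_{j=1}^{k} (2j-1)`. -/
noncomputable def doubleFact (k : ℕ) : ℝ := ∏ j ∈ Finset.range k, (2 * (j : ℝ) + 1)

/-- The 2k-th moment of the n×n GUE normalised one-point function
(Witte–Forrester hypergeometric representation). -/
noncomputable def QGUE (k n : ℕ) : ℝ :=
  doubleFact k *
    ∑ i ∈ Finset.range (k + 1),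
      poch (-(k : ℝ)) i * poch (1 - (n : ℝ)) i * 2 ^ i / (poch 2 i * (Nat.factorial i))

lemma poch_succ (a : ℝ) (i : ℕ) : poch a (i + 1) = poch a i * (a + i) := by
  simp [poch, Finset.prod_range_succ]

lemma poch_neg_nat (n i : ℕ) :
    poch (-(n : ℝ)) i = (-1) ^ i * (n.descFactorial i : ℝ) := by
  induction i with
  | zero => simp [poch]
  | succ i ih =>
    rw [poch_succ, ih, Nat.descFactorial_succ]
    rcases le_or_gt i n with h | h
    · rw [Nat.cast_mul, Nat.cast_sub h]
      ring
    · have h0 : n.descFactorial i = 0 := Nat.descFactorial_eq_zero_iff_lt.2 h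
      have h1 : n - i = 0 := by omega
      simp [h0, h1]

lemma poch_two (i : ℕ) : poch 2 i = ((i + 1).factorial : ℝ) := by
  induction i with
  | zero => simp [poch]
  | succ i ih =>
    rw [poch_succ, ih, Nat.factorial_succ (i + 1)]
    push_cast
    ring

lemma sumB (i : ℕ) {z : ℝ} (h : ‖z‖ < 1) :
    HasSum (fun n : ℕ => (((n + 1).descFactorial (i + 1) : ℕ) : ℝ) * z ^ n)
      (((i + 1).factorial : ℝ) * z ^ i / (1 - z) ^ (i + 2)) := by
  have H := (hasSum_choose_mul_geometric_of_norm_lt_one (𝕜 := ℝ) (i + 1) h).mul_left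
      (((i + 1).factorial : ℝ) * z ^ i)
  have key : HasSum
      (fun m : ℕ => (((m + i + 1).descFactorial (i + 1) : ℕ) : ℝ) * z ^ (m + i))
      (((i + 1).factorial : ℝ) * z ^ i / (1 - z) ^ (i + 2)) := by
    rw [show (((i + 1).factorial : ℝ) * z ^ i) * (1 / (1 - z) ^ (i + 1 + 1)) =
        ((i + 1).factorial : ℝ) * z ^ i / (1 - z) ^ (i + 2) by ring] at H
    refine H.congr_fun fun m => ?_
    rw [show m + i + 1 = m + (i + 1) by omega,
      Nat.descFactorial_eq_factorial_mul_choose, pow_add]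
    push_cast
    ring
  have := (hasSum_nat_add_iff
      (f := fun n : ℕ => (((n + 1).descFactorial (i + 1) : ℕ) : ℝ) * z ^ n) i).1 key
  have hzero : ∑ j ∈ Finset.range i,
      (((j + 1).descFactorial (i + 1) : ℕ) : ℝ) * z ^ j = 0 := by
    refine Finset.sum_eq_zero fun j hj => ?_
    rw [Finset.mem_range] at hj
    rw [Nat.descFactorial_eq_zero_iff_lt.2 (by omega)]
    simp
  rwa [hzero, add_zero] at this

/-- The 2k-th GUE moment, with `n-1` chosen according to a Negative Binomial distribution
with parameters `(2,z)`, equals the 2k-th moment of a centred Gaussian of variance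
`(1+z)/(1-z)`. -/
theorem GUE_randomised_moment (k : ℕ) (z : ℝ) (hz0 : 0 < z) (hz1 : z < 1) :
    HasSum (fun n : ℕ => QGUE k (n + 1) * ((n : ℝ) + 1) * (1 - z) ^ 2 * z ^ n)
      (doubleFact k * ((1 + z) / (1 - z)) ^ k) := by
  have hz : ‖z‖ < 1 := by rw [Real.norm_eq_abs, abs_lt]; constructor <;> linarith
  have h1z : (1 : ℝ) - z ≠ 0 := ne_of_gt (by linarith)
  set c : ℕ → ℝ := fun i =>
    doubleFact k * (poch (-(k : ℝ)) i * (-1) ^ i * 2 ^ i / (poch 2 i * (Nat.factorial i)))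
      * (1 - z) ^ 2 with hc
  have term : ∀ i : ℕ, HasSum
      (fun n : ℕ => c i * ((((n + 1).descFactorial (i + 1) : ℕ) : ℝ) * z ^ n))
      (c i * (((i + 1).factorial : ℝ) * z ^ i / (1 - z) ^ (i + 2))) :=
    fun i => (sumB i hz).mul_left (c i)
  have main : HasSum
      (fun n : ℕ => ∑ i ∈ Finset.range (k + 1),
        c i * ((((n + 1).descFactorial (i + 1) : ℕ) : ℝ) * z ^ n))
      (∑ i ∈ Finset.range (k + 1),
        c i * (((i + 1).factorial : ℝ) * z ^ i / (1 - z) ^ (i + 2))) :=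
    hasSum_sum fun i _ => term i
  have hfun : ∀ n : ℕ,
      (∑ i ∈ Finset.range (k + 1),
        c i * ((((n + 1).descFactorial (i + 1) : ℕ) : ℝ) * z ^ n))
      = QGUE k (n + 1) * ((n : ℝ) + 1) * (1 - z) ^ 2 * z ^ n := by
    intro n
    rw [QGUE, Finset.mul_sum, Finset.sum_mul, Finset.sum_mul, Finset.sum_mul]
    refine Finset.sum_congr rfl fun i _ => ?_
    have h1 : (1 : ℝ) - ((n + 1 : ℕ) : ℝ) = -(n : ℝ) := by push_cast; ring
    rw [hc]
    simp only
    rw [h1, poch_neg_nat n i, Nat.succ_descFactorial_succ]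
    push_cast
    ring
  have e1 : ∀ i : ℕ, poch (-(k : ℝ)) i * (-1) ^ i
      = (Nat.factorial i : ℝ) * (k.choose i : ℝ) := by
    intro i
    rw [poch_neg_nat, Nat.descFactorial_eq_factorial_mul_choose,
      mul_comm ((-1 : ℝ) ^ i) _, mul_assoc, ← pow_add, ← two_mul, pow_mul,
      neg_one_sq, one_pow, mul_one]
    push_cast
    ring
  have hsum : (∑ i ∈ Finset.range (k + 1),
      c i * (((i + 1).factorial : ℝ) * z ^ i / (1 - z) ^ (i + 2)))
      = doubleFact k * ((1 + z) / (1 - z)) ^ k := by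
    have step : ∀ i ∈ Finset.range (k + 1),
        c i * (((i + 1).factorial : ℝ) * z ^ i / (1 - z) ^ (i + 2))
        = doubleFact k * ((k.choose i : ℝ) * (2 * z) ^ i * (1 - z) ^ (k - i)) / (1 - z) ^ k := by
      intro i hi
      rw [Finset.mem_range] at hi
      have hik : i ≤ k := by omega
      rw [hc]
      simp only
      rw [e1 i, poch_two i]
      have hfac : ((i + 1).factorial : ℝ) ≠ 0 := by positivity
      have hifac : ((Nat.factorial i : ℕ) : ℝ) ≠ 0 := by positivity
      rw [show (1 - z) ^ (i + 2) = (1 - z) ^ i * (1 - z) ^ 2 from by rw [pow_add]]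
      rw [show (1 - z) ^ k = (1 - z) ^ (k - i) * (1 - z) ^ i from by
        rw [← pow_add]; congr 1; omega]
      rw [mul_pow]
      field_simp
    rw [Finset.sum_congr rfl step, ← Finset.sum_div, ← Finset.mul_sum]
    rw [show (∑ i ∈ Finset.range (k + 1), (k.choose i : ℝ) * (2 * z) ^ i * (1 - z) ^ (k - i))
        = (2 * z + (1 - z)) ^ k from by
      rw [add_pow]
      refine Finset.sum_congr rfl fun i _ => ?_
      ring]
    rw [div_pow, show (2 : ℝ) * z + (1 - z) = 1 + z by ring, mul_div_assoc]
  rw [← hsum]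
  exact main.congr_fun fun n => (hfun n).symm
end

section
/- Let 0 < q < 1, let k ≥ 0 be an integer, and set ν = (1-q²)^{-1/2}. Then the normalised 2k-th moment of the Gaussian q²-distribution equals the q²-double factorial: (∑_{n=0}^{∞} (νq^{2n})^{2k}·q^{2n} / ((q²;q²)_n·(-q²;q²)_n)) / (∑_{n=0}^{∞} q^{2n} / ((q²;q²)_n·(-q²;q²)_n)) = [2k-1]_{q²}!!, both series being convergent. -/
section Aux

lemma qPoch_pos_s13 {a c : ℝ} (ha0 : 0 ≤ a) (ha1 : a < 1) (hc0 : 0 ≤ c) (hc1 : c ≤ 1) (n : ℕ) :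
    0 < qPoch a c n := by
  apply Finset.prod_pos
  intro i _
  have h1 : c ^ i ≤ 1 := pow_le_one₀ hc0 hc1
  have h2 : 0 ≤ c ^ i := pow_nonneg hc0 i
  nlinarith

/-- The sum `S c z = ∑ z^n / (c;c)_n`. -/
noncomputable def qS (c z : ℝ) : ℝ := ∑' n : ℕ, z ^ n / qPoch c c n

variable {c : ℝ} (hc0 : 0 < c) (hc1 : c < 1)

include hc0 hc1

lemma qS_summable {z : ℝ} (hz0 : 0 < z) (hz1 : z < 1) :
    Summable (fun n : ℕ => z ^ n / qPoch c c n) := by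
  have hD : ∀ n, 0 < qPoch c c n := qPoch_pos_s13 hc0.le hc1 hc0.le hc1.le
  have hpos : ∀ n : ℕ, 0 < z ^ n / qPoch c c n := fun n => div_pos (pow_pos hz0 n) (hD n)
  apply summable_of_ratio_test_tendsto_lt_one hz1
  · filter_upwards with n
    exact (hpos n).ne'
  · have hkey : ∀ n : ℕ, ‖z ^ (n+1) / qPoch c c (n+1)‖ / ‖z ^ n / qPoch c c n‖
        = z / (1 - c * c ^ n) := by
      intro n
      have h1 : c ^ n ≤ 1 := pow_le_one₀ hc0.le hc1.le
      have hfac : 0 < 1 - c * c ^ n := by nlinarith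
      have hs : qPoch c c (n+1) = qPoch c c n * (1 - c * c ^ n) := Finset.prod_range_succ _ n
      have hDn := hD n
      have hzn : (0:ℝ) < z ^ n := pow_pos hz0 n
      rw [Real.norm_eq_abs, Real.norm_eq_abs, abs_of_pos (hpos (n+1)), abs_of_pos (hpos n), hs,
        pow_succ]
      field_simp
    simp only [hkey]
    have : Filter.Tendsto (fun n : ℕ => z / (1 - c * c ^ n)) Filter.atTop (nhds (z / (1 - c * 0))) := by
      apply Filter.Tendsto.div tendsto_const_nhds
      · exact (tendsto_const_nhds.sub ((tendsto_pow_atTop_nhds_zero_of_lt_one hc0.le hc1).const_mul c))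
      · norm_num
    simpa using this

set_option maxHeartbeats 1000000 in
lemma qS_funeq {z : ℝ} (hz0 : 0 < z) (hz1 : z < 1) :
    qS c (c * z) = (1 - z) * qS c z := by
  have hD : ∀ n, 0 < qPoch c c n := qPoch_pos_s13 hc0.le hc1 hc0.le hc1.le
  have hcz0 : 0 < c * z := by positivity
  have hcz1 : c * z < 1 := by nlinarith
  have hsum := qS_summable hc0 hc1 hz0 hz1
  have hsumc := qS_summable hc0 hc1 hcz0 hcz1
  -- shifted sums
  have hsum' : Summable (fun n : ℕ => z ^ (n+1) / qPoch c c (n+1)) :=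
    (summable_nat_add_iff (f := fun n : ℕ => z ^ n / qPoch c c n) 1).2 hsum
  have hsumc' : Summable (fun n : ℕ => (c*z) ^ (n+1) / qPoch c c (n+1)) :=
    (summable_nat_add_iff (f := fun n : ℕ => (c*z) ^ n / qPoch c c n) 1).2 hsumc
  have hsumU : Summable (fun n : ℕ => z ^ (n+1) / qPoch c c n) := by
    have he : (fun n : ℕ => z ^ (n+1) / qPoch c c n) = fun n => z * (z ^ n / qPoch c c n) := by
      funext n
      rw [pow_succ]
      ring
    rw [he]
    exact hsum.mul_left z
  -- termwise identity
  have hterm : ∀ n : ℕ, z ^ (n+1) / qPoch c c (n+1)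
      = z ^ (n+1) / qPoch c c n + (c*z) ^ (n+1) / qPoch c c (n+1) := by
    intro n
    have hs : qPoch c c (n+1) = qPoch c c n * (1 - c * c ^ n) := Finset.prod_range_succ _ n
    have h0 : qPoch c c n ≠ 0 := (hD n).ne'
    have h1 : qPoch c c (n+1) ≠ 0 := (hD (n+1)).ne'
    field_simp
    rw [hs]
    ring
  have hT : (∑' n : ℕ, z ^ (n+1) / qPoch c c (n+1))
      = (∑' n : ℕ, z ^ (n+1) / qPoch c c n) + ∑' n : ℕ, (c*z) ^ (n+1) / qPoch c c (n+1) := by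
    rw [← Summable.tsum_add hsumU hsumc']
    exact tsum_congr hterm
  have hU : (∑' n : ℕ, z ^ (n+1) / qPoch c c n) = z * qS c z := by
    rw [qS, ← tsum_mul_left]
    apply tsum_congr
    intro n
    rw [pow_succ]
    ring
  have e1 : qS c z = 1 + ∑' n : ℕ, z ^ (n+1) / qPoch c c (n+1) := by
    rw [qS, Summable.tsum_eq_zero_add hsum]
    simp [qPoch]
  have e2 : qS c (c*z) = 1 + ∑' n : ℕ, (c*z) ^ (n+1) / qPoch c c (n+1) := by
    rw [qS, Summable.tsum_eq_zero_add hsumc]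
    simp [qPoch]
  rw [e2]
  linear_combination -e1 - hT - hU

end Aux

/-- The normalised 2k-th moment of the Gaussian q²-distribution equals the
q²-double factorial `[2k-1]_{q²}!!`. -/
theorem gaussian_q_distribution_moments
    (q : ℝ) (hq0 : 0 < q) (hq1 : q < 1) (k : ℕ) :
    (Summable fun n : ℕ =>
        (((1 - q ^ 2) ^ (-(1 / 2 : ℝ)) : ℝ) * q ^ (2 * n)) ^ (2 * k) * q ^ (2 * n) /
          (qPoch (q ^ 2) (q ^ 2) n * qPoch (-(q ^ 2)) (q ^ 2) n)) ∧
    (Summable fun n : ℕ =>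
        q ^ (2 * n) / (qPoch (q ^ 2) (q ^ 2) n * qPoch (-(q ^ 2)) (q ^ 2) n)) ∧
    (∑' n : ℕ,
        (((1 - q ^ 2) ^ (-(1 / 2 : ℝ)) : ℝ) * q ^ (2 * n)) ^ (2 * k) * q ^ (2 * n) /
          (qPoch (q ^ 2) (q ^ 2) n * qPoch (-(q ^ 2)) (q ^ 2) n)) /
      (∑' n : ℕ,
        q ^ (2 * n) / (qPoch (q ^ 2) (q ^ 2) n * qPoch (-(q ^ 2)) (q ^ 2) n)) =
      qDF q k := by
  have hc0 : (0:ℝ) < q ^ 4 := by positivity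
  have hc1 : q ^ 4 < 1 := pow_lt_one₀ hq0.le hq1 (by norm_num)
  have hq2 : (0:ℝ) < q ^ 2 := by positivity
  have hq21 : q ^ 2 < 1 := pow_lt_one₀ hq0.le hq1 (by norm_num)
  have h1q2 : (0:ℝ) < 1 - q ^ 2 := by linarith
  -- denominator identity
  have hden : ∀ n : ℕ, qPoch (q ^ 2) (q ^ 2) n * qPoch (-(q ^ 2)) (q ^ 2) n
      = qPoch (q ^ 4) (q ^ 4) n := by
    intro n
    rw [qPoch, qPoch, qPoch, ← Finset.prod_mul_distrib]
    apply Finset.prod_congr rfl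
    intro i _
    have h : ((q:ℝ) ^ 2) ^ i * (q ^ 2) ^ i = (q ^ 4) ^ i := by
      rw [← mul_pow]; ring_nf
    linear_combination (-(q^4)) * h
  -- term rewriting for numerator
  have hnu : (((1 - q ^ 2) ^ (-(1 / 2 : ℝ)) : ℝ)) ^ (2 * k) = ((1 - q ^ 2) ^ k)⁻¹ := by
    rw [← Real.rpow_natCast ((1 - q ^ 2) ^ (-(1 / 2 : ℝ))) (2 * k),
        ← Real.rpow_mul h1q2.le]
    push_cast
    rw [show (-(1 / 2 : ℝ)) * (2 * (k:ℝ)) = -(k:ℝ) by ring, Real.rpow_neg h1q2.le,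
        Real.rpow_natCast]
  have hz : ∀ j : ℕ, (0:ℝ) < q ^ (2 * (2 * j + 1)) ∧ q ^ (2 * (2 * j + 1)) < 1 := by
    intro j
    constructor
    · positivity
    · exact pow_lt_one₀ hq0.le hq1 (by omega)
  -- key recursion
  have hS : ∀ j : ℕ, qS (q ^ 4) (q ^ (2 * (2 * j + 1)))
      = qS (q ^ 4) (q ^ 2) * ∏ i ∈ Finset.range j, (1 - q ^ (4 * i + 2)) := by
    intro j
    induction j with
    | zero => simp
    | succ j ih =>
      have hzz := hz j
      have : (q:ℝ) ^ (2 * (2 * (j+1) + 1)) = q ^ 4 * q ^ (2 * (2 * j + 1)) := by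
        rw [← pow_add]
        ring_nf
      rw [this, qS_funeq hc0 hc1 hzz.1 hzz.2, ih, Finset.prod_range_succ]
      have : (q:ℝ) ^ (2 * (2 * j + 1)) = q ^ (4 * j + 2) := by ring_nf
      rw [this]; ring
  have hnum_term : ∀ n : ℕ,
      (((1 - q ^ 2) ^ (-(1 / 2 : ℝ)) : ℝ) * q ^ (2 * n)) ^ (2 * k) * q ^ (2 * n) /
          (qPoch (q ^ 2) (q ^ 2) n * qPoch (-(q ^ 2)) (q ^ 2) n)
      = ((1 - q ^ 2) ^ k)⁻¹ * ((q ^ (2 * (2 * k + 1))) ^ n / qPoch (q ^ 4) (q ^ 4) n) := by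
    intro n
    rw [hden n, mul_pow, hnu]
    have : ((q:ℝ) ^ (2 * n)) ^ (2 * k) * q ^ (2 * n) = (q ^ (2 * (2 * k + 1))) ^ n := by
      rw [← pow_mul, ← pow_add, ← pow_mul]
      ring_nf
    rw [mul_assoc, this, mul_div_assoc]
  have hden_term : ∀ n : ℕ,
      q ^ (2 * n) / (qPoch (q ^ 2) (q ^ 2) n * qPoch (-(q ^ 2)) (q ^ 2) n)
      = (q ^ 2) ^ n / qPoch (q ^ 4) (q ^ 4) n := by
    intro n
    rw [hden n, ← pow_mul]
  have hsum0 : Summable (fun n : ℕ => ((q:ℝ) ^ 2) ^ n / qPoch (q ^ 4) (q ^ 4) n) :=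
    qS_summable hc0 hc1 hq2 hq21
  have hsumk : Summable (fun n : ℕ => ((q:ℝ) ^ (2 * (2 * k + 1))) ^ n / qPoch (q ^ 4) (q ^ 4) n) :=
    qS_summable hc0 hc1 (hz k).1 (hz k).2
  refine ⟨?_, ?_, ?_⟩
  · simp only [hnum_term]
    exact hsumk.mul_left _
  · simp only [hden_term]
    exact hsum0
  · have hpos : 0 < qS (q ^ 4) (q ^ 2) := by
      have hD : ∀ n, 0 < qPoch (q^4) (q^4) n := qPoch_pos_s13 hc0.le hc1 hc0.le hc1.le
      apply Summable.tsum_pos hsum0 (fun n => (div_pos (pow_pos hq2 n) (hD n)).le) 0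
      exact div_pos (pow_pos hq2 0) (hD 0)
    calc (∑' n : ℕ,
        (((1 - q ^ 2) ^ (-(1 / 2 : ℝ)) : ℝ) * q ^ (2 * n)) ^ (2 * k) * q ^ (2 * n) /
          (qPoch (q ^ 2) (q ^ 2) n * qPoch (-(q ^ 2)) (q ^ 2) n)) /
      (∑' n : ℕ,
        q ^ (2 * n) / (qPoch (q ^ 2) (q ^ 2) n * qPoch (-(q ^ 2)) (q ^ 2) n))
        = (((1 - q ^ 2) ^ k)⁻¹ * qS (q ^ 4) (q ^ (2 * (2 * k + 1)))) / qS (q ^ 4) (q ^ 2) := by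
          rw [tsum_congr hnum_term, tsum_congr hden_term, tsum_mul_left]
          rfl
      _ = ((1 - q ^ 2) ^ k)⁻¹ * ∏ i ∈ Finset.range k, (1 - q ^ (4 * i + 2)) := by
          rw [hS k]
          field_simp [hpos.ne']
      _ = qDF q k := by
          rw [qDF, Finset.prod_div_distrib, Finset.prod_const, Finset.card_range,
            div_eq_mul_inv, mul_comm]
end
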